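/- arXiv:math/0311202 — 6 statements merged into one kernel-verified Lean document; each statement's English description precedes it below -/
import Mathlib

section
/- If n, A, B, C are integers with nA² + BC = -1, then the polynomial nC·X² - 2nA·X - B is irreducible (equivalently, primitive as a quadratic polynomial with negative discriminant) unless B and C are both even; in that case (nC/2)·X² - nA·X - B/2 has integer coefficients, content 1, and discriminant -n. -/
/-!
A common divisor `d` of the three coefficients divides every integer combination of them; the
combination `2nA · A + B · 2C = 2(nA² + BC) = -2` gives `d ∣ 2`. If `d = 2`, then `B` is even, so
`nA² = -1 - BC` is odd, hence `n` is odd and `2 ∣ nC` forces `C` to be even. When `B = 2b` and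
`C = 2c`, the combination `nA · A + b · 4c = -1` gives content `1`, and the discriminant is
`n²A² + 4nbc = n(nA² + BC) = -n`.
-/

theorem Int.gcd_gcd_dvd_natAbs_of_mul_add_mul_add_mul_eq {a b c u v w k : ℤ}
    (h : a * u + b * v + c * w = k) : a.gcd (b.gcd c) ∣ k.natAbs := by
  have hb : (a.gcd (b.gcd c) : ℤ) ∣ b := (Int.gcd_dvd_right _ _).trans (Int.gcd_dvd_left _ _)
  have hc : (a.gcd (b.gcd c) : ℤ) ∣ c := (Int.gcd_dvd_right _ _).trans (Int.gcd_dvd_right _ _)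
  rw [← Int.natCast_dvd, ← h]
  exact (((Int.gcd_dvd_left _ _).mul_right u).add (hb.mul_right v)).add (hc.mul_right w)

theorem Int.odd_of_mul_sq_add_mul_eq_neg_one {n A B C : ℤ} (h : n * A ^ 2 + B * C = -1)
    (hB : Even B) : Odd n := by
  by_contra hn
  rw [Int.not_odd_iff_even] at hn
  have h_even : Even (n * A ^ 2 + B * C) := (hn.mul_right _).add (hB.mul_right C)
  rw [h] at h_even
  exact absurd h_even (by decide)

theorem gcd_mul_gcd_two_mul_mul_eq_one_of_not_even_and_even {n A B C : ℤ}
    (h : n * A ^ 2 + B * C = -1) (h_not_even : ¬ (Even B ∧ Even C)) :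
    Int.gcd (n * C) (Int.gcd (2 * n * A) B) = 1 := by
  have h_dvd_two : Int.gcd (n * C) (Int.gcd (2 * n * A) B) ∣ (-2 : ℤ).natAbs :=
    Int.gcd_gcd_dvd_natAbs_of_mul_add_mul_add_mul_eq (u := 0) (v := A) (w := 2 * C)
      (by linear_combination 2 * h)
  rcases (Nat.dvd_prime Nat.prime_two).mp h_dvd_two with h_one | h_two
  · exact h_one
  have h_dvd_nC : (2 : ℤ) ∣ n * C := by exact_mod_cast h_two ▸ Int.gcd_dvd_left _ _
  have h_dvd_B : (2 : ℤ) ∣ B := by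
    exact_mod_cast h_two ▸ (Int.gcd_dvd_right _ _).trans (Int.gcd_dvd_right _ _)
  have hB_even : Even B := even_iff_two_dvd.mpr h_dvd_B
  have hC_even : Even C := (Int.even_mul.mp (even_iff_two_dvd.mpr h_dvd_nC)).resolve_left
    (Int.not_even_iff_odd.mpr (Int.odd_of_mul_sq_add_mul_eq_neg_one h hB_even))
  exact absurd ⟨hB_even, hC_even⟩ h_not_even

theorem primitivity_cases_general (n A B C : ℤ)
    (h : n * A ^ 2 + B * C = -1) :
    (¬ (Even B ∧ Even C) → Int.gcd (n * C) (Int.gcd (2 * n * A) B) = 1) ∧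
    (Even B ∧ Even C →
      2 ∣ n * C ∧ 2 ∣ B ∧
      Int.gcd (n * C / 2) (Int.gcd (n * A) (B / 2)) = 1 ∧
      (-(n * A)) ^ 2 - 4 * (n * C / 2) * (-(B / 2)) = -n) := by
  refine ⟨gcd_mul_gcd_two_mul_mul_eq_one_of_not_even_and_even h, ?_⟩
  rintro ⟨hB_even, hC_even⟩
  obtain ⟨b, rfl⟩ := even_iff_two_dvd.mp hB_even
  obtain ⟨c, rfl⟩ := even_iff_two_dvd.mp hC_even
  rw [mul_left_comm, Int.mul_ediv_cancel_left _ two_ne_zero,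
    Int.mul_ediv_cancel_left _ two_ne_zero]
  refine ⟨dvd_mul_right _ _, dvd_mul_right _ _, ?_, by linear_combination n * h⟩
  exact Nat.dvd_one.mp (Int.gcd_gcd_dvd_natAbs_of_mul_add_mul_add_mul_eq (u := 0) (v := A)
    (w := 4 * c) (k := -1) (by linear_combination h))

theorem primitivity_cases (n A B C : ℤ) (hn : 1 < n)
    (h : n * A ^ 2 + B * C = -1) (hB : B < 0) (hC : 0 < C) :
    (¬ (Even B ∧ Even C) → Int.gcd (n * C) (Int.gcd (2 * n * A) B) = 1) ∧
    (Even B ∧ Even C →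
      2 ∣ n * C ∧ 2 ∣ B ∧
      Int.gcd (n * C / 2) (Int.gcd (n * A) (B / 2)) = 1 ∧
      (-(n * A)) ^ 2 - 4 * (n * C / 2) * (-(B / 2)) = -n) :=
  primitivity_cases_general n A B C h
end

section
/- Let n > 1 and suppose δ = [[a,b],[c,d]] ∈ SL₂(ℤ) satisfies δᵀ·[[nC,-nA],[-nA,-B]]·δ = [[nC',-nA'],[-nA',-B']] where nA²+BC = -1 = nA'²+B'C'. Then n divides c, i.e., δ ∈ Γ₀(n). -/
/-! Modulo `n` the top row of the congruence reads `B c² ≡ 0` and `B c d ≡ 0`. Since `c` and `d`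
are coprime this gives `n ∣ B c`, and `n A² + B C = -1` makes `n` coprime to `B`. -/

open Matrix

theorem transpose_mul_symm_mul_fin_two {R : Type*} [CommRing R] (a b c d p q r : R) :
    (!![a, b; c, d]).transpose * !![p, q; q, r] * !![a, b; c, d] =
      !![p * a ^ 2 + 2 * q * a * c + r * c ^ 2, p * a * b + q * (a * d + b * c) + r * c * d;
        p * a * b + q * (a * d + b * c) + r * c * d, p * b ^ 2 + 2 * q * b * d + r * d ^ 2] := by
  ext i j
  fin_cases i <;> fin_cases j <;> simp [mul_apply, Fin.sum_univ_two] <;> ring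

theorem dvd_of_dvd_mul_of_dvd_mul_of_isCoprime {R : Type*} [CommRing R] {n x c d : R}
    (hcd : IsCoprime c d) (hc : n ∣ x * c) (hd : n ∣ x * d) : n ∣ x := by
  obtain ⟨u, v, huv⟩ := hcd
  have hx : x = u * (x * c) + v * (x * d) := by linear_combination -x * huv
  rw [hx]
  exact dvd_add (hc.mul_left u) (hd.mul_left v)

theorem conj_in_Gamma0_general (n A B C A' B' C' a b c d : ℤ)
    (h : n * A ^ 2 + B * C = -1)
    (hdet : a * d - b * c = 1)
    (heq : (!![a, b; c, d]).transpose * !![n * C, -(n * A); -(n * A), -B] * !![a, b; c, d]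
        = !![n * C', -(n * A'); -(n * A'), -B']) :
    n ∣ c := by
  rw [transpose_mul_symm_mul_fin_two] at heq
  have e₀₀ := congrFun (congrFun heq 0) 0
  have e₀₁ := congrFun (congrFun heq 0) 1
  simp only [of_apply, cons_val', cons_val_zero, cons_val_one, empty_val', cons_val_fin_one]
    at e₀₀ e₀₁
  have hc : n ∣ B * c * c := ⟨C * a ^ 2 - 2 * A * a * c - C', by linear_combination -e₀₀⟩
  have hd : n ∣ B * c * d := ⟨C * a * b - A * (a * d + b * c) + A', by linear_combination -e₀₁⟩
  have hBc : n ∣ B * c :=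
    dvd_of_dvd_mul_of_dvd_mul_of_isCoprime ⟨-b, a, by linear_combination hdet⟩ hc hd
  have hnB : IsCoprime n B := ⟨-A ^ 2, -C, by linear_combination -h⟩
  exact hnB.dvd_of_dvd_mul_left hBc

theorem conj_in_Gamma0 (n A B C A' B' C' a b c d : ℤ) (hn : 1 < n)
    (h : n * A ^ 2 + B * C = -1) (h' : n * A' ^ 2 + B' * C' = -1)
    (hdet : a * d - b * c = 1)
    (heq : (!![a, b; c, d]).transpose * !![n * C, -(n * A); -(n * A), -B] * !![a, b; c, d]
        = !![n * C', -(n * A'); -(n * A'), -B']) :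
    n ∣ c :=
  conj_in_Gamma0_general n A B C A' B' C' a b c d h hdet heq
end

section
/- Let n ≡ 3 (mod 4) be a positive integer and G(x,y) = ax² + bxy + cy² a primitive positive definite binary quadratic form of discriminant -n with gcd(c, n) = 1. Then there is an integer k such that the substituted form with coefficients a' = a+bk+ck², b' = b+2kc, c satisfies n ∣ b' and n ∣ a'. -/
/-!
Since `n` is odd and prime to `c`, the element `2c` is invertible mod `n`, so `k` can be chosen with
`b + 2kc ≡ 0 (mod n)`. The substitution `x ↦ x + ky` preserves the discriminant, so
`4c (a + bk + ck²) = (b + 2kc)² + n ≡ 0 (mod n)`, and cancelling the unit `4c` gives `n ∣ a + bk + ck²`.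
-/

theorem IsCoprime.exists_dvd_add_mul {R : Type*} [CommRing R] {u n : R} (h : IsCoprime u n)
    (b : R) : ∃ k, n ∣ b + k * u := by
  obtain ⟨x, y, hxy⟩ := h
  exact ⟨-b * x, b * y, by linear_combination (-b) * hxy⟩

theorem dvd_of_dvd_of_sq_sub_four_mul_eq_neg {R : Type*} [CommRing R] {n a b c : R}
    (hcn : IsCoprime (2 * c) n) (hb : n ∣ b) (hdisc : b ^ 2 - 4 * a * c = -n) : n ∣ a := by
  have h4cn : IsCoprime (2 * (2 * c)) n := hcn.of_mul_left_left.mul_left hcn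
  have h4ca : 2 * (2 * c) * a = b ^ 2 + n := by linear_combination -hdisc
  exact h4cn.symm.dvd_of_dvd_mul_left (h4ca ▸ dvd_add (dvd_pow hb two_ne_zero) dvd_rfl)

theorem reduce_disc_n_general (n a b c : ℤ) (hn4 : n % 4 = 3)
    (hdisc : b ^ 2 - 4 * a * c = -n)
    (hc : Int.gcd c n = 1) :
    ∃ k : ℤ, n ∣ b + 2 * k * c ∧ n ∣ a + b * k + c * k ^ 2 := by
  have h2n : IsCoprime 2 n := Int.isCoprime_two_left.mpr (Int.odd_iff.mpr (by omega))
  have h2cn : IsCoprime (2 * c) n := h2n.mul_left (Int.isCoprime_iff_gcd_eq_one.mpr hc)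
  obtain ⟨k, hk⟩ := h2cn.exists_dvd_add_mul b
  have hb' : n ∣ b + 2 * k * c := by rwa [mul_assoc, mul_left_comm]
  refine ⟨k, hb', dvd_of_dvd_of_sq_sub_four_mul_eq_neg h2cn hb' ?_⟩
  linear_combination hdisc

theorem reduce_disc_n (n a b c : ℤ) (hn : 0 < n) (hn4 : n % 4 = 3) (ha : 0 < a)
    (hdisc : b ^ 2 - 4 * a * c = -n)
    (hprim : Int.gcd a (Int.gcd b c) = 1)
    (hc : Int.gcd c n = 1) :
    ∃ k : ℤ, n ∣ b + 2 * k * c ∧ n ∣ a + b * k + c * k ^ 2 :=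
  reduce_disc_n_general n a b c hn4 hdisc hc
end

section
/- Every primitive positive definite binary quadratic form of discriminant -4n is properly equivalent (under SL₂(ℤ)) to a form nC·x² - 2nA·xy - B·y² with integers A, B < 0, C > 0 satisfying nA² + BC = -1. -/
lemma rep_coprime (n a b c : ℤ) (hn : 0 < n)
    (hprim : Int.gcd a (Int.gcd b c) = 1) :
    ∃ x y : ℤ, IsCoprime x y ∧ 1 ≤ y ∧
      Int.gcd (a * x ^ 2 + b * x * y + c * y ^ 2) n = 1 := by
  classical
  set sB : Finset ℕ := n.natAbs.primeFactors.filter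
    (fun p => p ∣ a.natAbs ∧ ¬ p ∣ c.natAbs) with hsB
  set sA : Finset ℕ := n.natAbs.primeFactors.filter (fun p => ¬ p ∣ a.natAbs) with hsA
  set x : ℕ := ∏ p ∈ sB, p with hx
  set y : ℕ := ∏ p ∈ sA, p with hy
  have hdvd_prod : ∀ (s : Finset ℕ), s ⊆ n.natAbs.primeFactors → ∀ p : ℕ, p.Prime →
      (p ∣ ∏ q ∈ s, q ↔ p ∈ s) := by
    intro s hs p hp
    constructor
    · intro h
      obtain ⟨q, hq, hpq⟩ := (hp.prime.dvd_finset_prod_iff _).mp h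
      have hqp : q.Prime := (Nat.mem_primeFactors.mp (hs hq)).1
      rwa [(Nat.prime_dvd_prime_iff_eq hp hqp).mp hpq]
    · intro h
      exact Finset.dvd_prod_of_mem _ h
  have hsBsub : sB ⊆ n.natAbs.primeFactors := Finset.filter_subset _ _
  have hsAsub : sA ⊆ n.natAbs.primeFactors := Finset.filter_subset _ _
  have hxd : ∀ p : ℕ, p.Prime → (p ∣ x ↔ p ∈ sB) := hdvd_prod sB hsBsub
  have hyd : ∀ p : ℕ, p.Prime → (p ∣ y ↔ p ∈ sA) := hdvd_prod sA hsAsub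
  have hnoprime : ∀ p : ℕ, p.Prime → p ∣ a.natAbs → p ∣ b.natAbs → p ∣ c.natAbs → False := by
    intro p hp hpa hpb hpc
    have h1 : (p:ℤ) ∣ (Int.gcd a (Int.gcd b c) : ℤ) :=
      Int.dvd_coe_gcd (Int.natCast_dvd.mpr hpa)
        (Int.dvd_coe_gcd (Int.natCast_dvd.mpr hpb) (Int.natCast_dvd.mpr hpc))
    rw [hprim] at h1
    exact hp.ne_one (Nat.dvd_one.mp (Int.natCast_dvd.mp h1))
  have hxy : Nat.Coprime x y := by
    by_contra hne
    obtain ⟨p, hp, hpg⟩ := Nat.exists_prime_and_dvd hne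
    have hpx := (hxd p hp).mp (hpg.trans (Nat.gcd_dvd_left _ _))
    have hpy := (hyd p hp).mp (hpg.trans (Nat.gcd_dvd_right _ _))
    rw [hsB, Finset.mem_filter] at hpx
    rw [hsA, Finset.mem_filter] at hpy
    exact hpy.2 hpx.2.1
  have hy1 : 1 ≤ y := Nat.one_le_iff_ne_zero.mpr (by
    rw [hy]
    exact Finset.prod_ne_zero_iff.mpr
      (fun p hp => (Nat.mem_primeFactors.mp (hsAsub hp)).1.ne_zero))
  refine ⟨(x:ℤ), (y:ℤ), Nat.isCoprime_iff_coprime.mpr hxy, by exact_mod_cast hy1, ?_⟩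
  set Q : ℤ := a * (x:ℤ) ^ 2 + b * (x:ℤ) * (y:ℤ) + c * (y:ℤ) ^ 2 with hQ
  by_contra hne
  obtain ⟨p, hp, hpg⟩ := Nat.exists_prime_and_dvd hne
  have hpn : p ∣ n.natAbs := hpg.trans (Nat.gcd_dvd_right _ _)
  have hpQ : (p:ℤ) ∣ Q := Int.natCast_dvd.mpr (hpg.trans (Nat.gcd_dvd_left _ _))
  have hpmem : p ∈ n.natAbs.primeFactors :=
    Nat.mem_primeFactors.mpr ⟨hp, hpn, Int.natAbs_ne_zero.mpr hn.ne'⟩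
  have hppz : Prime (p:ℤ) := Nat.prime_iff_prime_int.mp hp
  have hnx : ∀ h : ¬ p ∈ sB, ¬ (p:ℤ) ∣ (x:ℤ) :=
    fun h hd => h ((hxd p hp).mp (Int.natCast_dvd_natCast.mp hd))
  have hny : ∀ h : ¬ p ∈ sA, ¬ (p:ℤ) ∣ (y:ℤ) :=
    fun h hd => h ((hyd p hp).mp (Int.natCast_dvd_natCast.mp hd))
  by_cases hpa : p ∣ a.natAbs
  · by_cases hpc : p ∣ c.natAbs
    · have hpb : ¬ p ∣ b.natAbs := fun h => hnoprime p hp hpa h hpc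
      have hpx : ¬ (p:ℤ) ∣ (x:ℤ) := hnx (by
        rw [hsB, Finset.mem_filter]; rintro ⟨-, -, h⟩; exact h hpc)
      have hpy : ¬ (p:ℤ) ∣ (y:ℤ) := hny (by
        rw [hsA, Finset.mem_filter]; rintro ⟨-, h⟩; exact h hpa)
      have hbxy : (p:ℤ) ∣ b * (x:ℤ) * (y:ℤ) := by
        have h3 : (p:ℤ) ∣ Q - a*(x:ℤ)^2 - c*(y:ℤ)^2 :=
          dvd_sub (dvd_sub hpQ ((Int.natCast_dvd.mpr hpa).mul_right _))
            ((Int.natCast_dvd.mpr hpc).mul_right _)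
        have he : Q - a*(x:ℤ)^2 - c*(y:ℤ)^2 = b * (x:ℤ) * (y:ℤ) := by rw [hQ]; ring
        rwa [he] at h3
      rcases hppz.dvd_mul.mp hbxy with h | h
      · rcases hppz.dvd_mul.mp h with h' | h'
        · exact hpb (Int.natCast_dvd.mp h')
        · exact hpx h'
      · exact hpy h
    · have hpBmem : p ∈ sB := by rw [hsB, Finset.mem_filter]; exact ⟨hpmem, hpa, hpc⟩
      have hpx : (p:ℤ) ∣ (x:ℤ) := Int.natCast_dvd_natCast.mpr ((hxd p hp).mpr hpBmem)
      have hpy : ¬ (p:ℤ) ∣ (y:ℤ) := hny (by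
        rw [hsA, Finset.mem_filter]; rintro ⟨-, h⟩; exact h hpa)
      have hcy : (p:ℤ) ∣ c * (y:ℤ)^2 := by
        have h3 : (p:ℤ) ∣ Q - a*(x:ℤ)^2 - b*(x:ℤ)*(y:ℤ) :=
          dvd_sub (dvd_sub hpQ ((Int.natCast_dvd.mpr hpa).mul_right _))
            ((hpx.mul_left b).mul_right (y:ℤ))
        have he : Q - a*(x:ℤ)^2 - b*(x:ℤ)*(y:ℤ) = c * (y:ℤ)^2 := by rw [hQ]; ring
        rwa [he] at h3
      rcases hppz.dvd_mul.mp hcy with h | h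
      · exact hpc (Int.natCast_dvd.mp h)
      · exact hpy (hppz.dvd_of_dvd_pow h)
  · have hpAmem : p ∈ sA := by rw [hsA, Finset.mem_filter]; exact ⟨hpmem, hpa⟩
    have hpy : (p:ℤ) ∣ (y:ℤ) := Int.natCast_dvd_natCast.mpr ((hyd p hp).mpr hpAmem)
    have hpx : ¬ (p:ℤ) ∣ (x:ℤ) := hnx (by
      rw [hsB, Finset.mem_filter]; rintro ⟨-, h, -⟩; exact hpa h)
    have hax : (p:ℤ) ∣ a * (x:ℤ)^2 := by
      have h3 : (p:ℤ) ∣ Q - b*(x:ℤ)*(y:ℤ) - c*(y:ℤ)^2 :=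
        dvd_sub (dvd_sub hpQ (hpy.mul_left _)) ((dvd_pow hpy two_ne_zero).mul_left c)
      have he : Q - b*(x:ℤ)*(y:ℤ) - c*(y:ℤ)^2 = a * (x:ℤ)^2 := by rw [hQ]; ring
      rwa [he] at h3
    rcases hppz.dvd_mul.mp hax with h | h
    · exact hpa (Int.natCast_dvd.mp h)
    · exact hpx (hppz.dvd_of_dvd_pow h)

/-- Every primitive positive definite binary quadratic form of discriminant `-4n`
is properly equivalent to a form `nC·x² - 2nA·xy - B·y²` with `nA² + BC = -1`,
`B < 0`, `C > 0`. The substitution `(x,y) ↦ (px+qy, rx+sy)` with `ps - qr = 1`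
transforms `(a,b,c)` into `(ap²+bpr+cr², 2apq+b(ps+qr)+2crs, aq²+bqs+cs²)`. -/
theorem equiv_to_special_form_disc4n (n a b c : ℤ) (hn : 0 < n) (ha : 0 < a)
    (hdisc : b ^ 2 - 4 * a * c = -4 * n)
    (hprim : Int.gcd a (Int.gcd b c) = 1) :
    ∃ A B C p q r s : ℤ,
      n * A ^ 2 + B * C = -1 ∧ B < 0 ∧ 0 < C ∧
      p * s - q * r = 1 ∧
      a * p ^ 2 + b * p * r + c * r ^ 2 = n * C ∧
      2 * a * p * q + b * (p * s + q * r) + 2 * c * r * s = -(2 * n * A) ∧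
      a * q ^ 2 + b * q * s + c * s ^ 2 = -B := by
  obtain ⟨b0, rfl⟩ : ∃ b0, b = 2 * b0 := by
    have hbb : (2:ℤ) ∣ b * b := ⟨2*(a*c-n), by linear_combination hdisc⟩
    obtain h | h := (Int.prime_two.dvd_mul.mp hbb) <;> exact h
  have hdisc0 : b0 ^ 2 - a * c = -n := by
    have h4 : (4:ℤ) * (b0^2 - a*c) = 4 * (-n) := by linear_combination hdisc
    exact mul_left_cancel₀ (by norm_num) h4
  obtain ⟨X, Y, hXY, hY1, hg⟩ := rep_coprime n a (2*b0) c hn hprim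
  have hcop : IsCoprime (a * X ^ 2 + 2 * b0 * X * Y + c * Y ^ 2) n :=
    Int.isCoprime_iff_gcd_eq_one.mpr hg
  have ha1pos : 0 < a * X ^ 2 + 2 * b0 * X * Y + c * Y ^ 2 := by
    have hY2 : 1 ≤ Y ^ 2 := by nlinarith [hY1]
    have hidd : 4 * a * (a * X ^ 2 + 2 * b0 * X * Y + c * Y ^ 2)
        = (2*a*X + 2*b0*Y)^2 + 4*n*Y^2 := by linear_combination (-4*Y^2) * hdisc0
    nlinarith [hidd, sq_nonneg (2*a*X + 2*b0*Y), hn, ha, hY2]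
  have hcop2 := hcop
  obtain ⟨u2, v2, huv2⟩ := hXY
  obtain ⟨a1, ha1def⟩ : ∃ z : ℤ, z = a * X ^ 2 + 2 * b0 * X * Y + c * Y ^ 2 := ⟨_, rfl⟩
  rw [← ha1def] at ha1pos hcop hcop2
  obtain ⟨q0, hq0def⟩ : ∃ z : ℤ, z = -v2 := ⟨_, rfl⟩
  obtain ⟨s0, hs0def⟩ : ∃ z : ℤ, z = u2 := ⟨_, rfl⟩
  have hdet1 : X * s0 - q0 * Y = 1 := by rw [hq0def, hs0def]; linear_combination huv2
  obtain ⟨b01, hb01def⟩ : ∃ z : ℤ, z = a*X*q0 + b0*(X*s0 + q0*Y) + c*Y*s0 := ⟨_, rfl⟩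
  obtain ⟨c1, hc1def⟩ : ∃ z : ℤ, z = a*q0^2 + 2*b0*q0*s0 + c*s0^2 := ⟨_, rfl⟩
  have hdisc1 : b01 ^ 2 - a1 * c1 = -n := by
    rw [hb01def, ha1def, hc1def]
    linear_combination ((b0^2 - a*c) * ((X*s0 - q0*Y) + 1)) * hdet1 + hdisc0
  obtain ⟨u, v, huv⟩ := hcop
  obtain ⟨t, htdef⟩ : ∃ z : ℤ, z = -(b01 * u) := ⟨_, rfl⟩
  obtain ⟨A0, hA0def⟩ : ∃ z : ℤ, z = b01 * v := ⟨_, rfl⟩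
  have hw : a1 * t + b01 = n * A0 := by
    rw [htdef, hA0def]; linear_combination (-b01) * huv
  have hkey : a1 * (a1*t^2 + 2*b01*t + c1) = n * (n*A0^2 + 1) := by
    linear_combination (a1*t + b01 + n*A0) * hw - hdisc1
  have hcop' : IsCoprime n a1 := hcop2.symm
  have hdvd : n ∣ (a1*t^2 + 2*b01*t + c1) :=
    hcop'.dvd_of_dvd_mul_left ⟨n*A0^2 + 1, hkey⟩
  obtain ⟨C, hC⟩ := hdvd
  have hcpos : 0 < a1*t^2 + 2*b01*t + c1 := by
    have h1 : (0:ℤ) < n * (n*A0^2 + 1) := by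
      nlinarith [mul_nonneg (mul_nonneg hn.le hn.le) (sq_nonneg A0), hn]
    by_contra hle
    push_neg at hle
    have h2 : a1 * (a1*t^2 + 2*b01*t + c1) ≤ 0 :=
      mul_nonpos_iff.mpr (Or.inl ⟨ha1pos.le, hle⟩)
    rw [hkey] at h2
    linarith
  have hCpos : 0 < C := by
    have h2 : 0 < n * C := hC ▸ hcpos
    rcases mul_pos_iff.mp h2 with ⟨-, h⟩ | ⟨h, -⟩
    · exact h
    · linarith
  have ha1C : a1 * C = n * A0 ^ 2 + 1 := by
    have h3 : n * (a1 * C) = n * (n * A0 ^ 2 + 1) := by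
      rw [← hkey, hC]; ring
    exact mul_left_cancel₀ hn.ne' h3
  refine ⟨A0, -a1, C, X*t + q0, -X, Y*t + s0, -Y, ?_, ?_, ?_, ?_, ?_, ?_, ?_⟩
  · linear_combination -ha1C
  · linarith
  · exact hCpos
  · linear_combination hdet1
  · rw [ha1def, hb01def, hc1def] at hC
    linear_combination hC
  · rw [ha1def, hb01def] at hw
    linear_combination (-2) * hw
  · rw [ha1def]
    ring
end

section
/- Every primitive positive definite binary quadratic form of discriminant -n, where n ≡ 3 (mod 4) is positive, is properly equivalent to a form (nC/2)·x² - nA·xy - (B/2)·y² where A, B, C are integers with nA² + BC = -1, B < 0 even, C > 0 even. -/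
lemma exists_coprime_value (n a b c : ℤ) (hn : 0 < n)
    (hprim : Int.gcd a (Int.gcd b c) = 1) :
    ∃ x y : ℤ, IsCoprime x y ∧ IsCoprime (a * x ^ 2 + b * x * y + c * y ^ 2) n := by
  classical
  set S := n.natAbs.primeFactors with hS
  set T1 := S.filter (fun p : ℕ => ¬ ((p : ℤ) ∣ a)) with hT1
  set T2 := S.filter (fun p : ℕ => ((p : ℤ) ∣ a) ∧ ¬ ((p : ℤ) ∣ c)) with hT2
  set N1 := ∏ p ∈ T1, p with hN1
  set N2 := ∏ p ∈ T2, p with hN2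
  have hd1 : ∀ p : ℕ, p.Prime → p ∣ N1 → ¬ ((p : ℤ) ∣ a) := by
    intro p hp hdvd
    obtain ⟨q, hqT, hpq⟩ := (Nat.Prime.prime hp).dvd_finset_prod_iff _ |>.mp hdvd
    have hq : q.Prime := Nat.prime_of_mem_primeFactors (Finset.mem_filter.mp hqT).1
    obtain rfl : p = q := (Nat.prime_dvd_prime_iff_eq hp hq).mp hpq
    exact (Finset.mem_filter.mp hqT).2
  have hd2 : ∀ p : ℕ, p.Prime → p ∣ N2 → ((p : ℤ) ∣ a) ∧ ¬ ((p : ℤ) ∣ c) := by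
    intro p hp hdvd
    obtain ⟨q, hqT, hpq⟩ := (Nat.Prime.prime hp).dvd_finset_prod_iff _ |>.mp hdvd
    have hq : q.Prime := Nat.prime_of_mem_primeFactors (Finset.mem_filter.mp hqT).1
    obtain rfl : p = q := (Nat.prime_dvd_prime_iff_eq hp hq).mp hpq
    exact (Finset.mem_filter.mp hqT).2
  have hmem1 : ∀ p : ℕ, p ∈ S → ¬ ((p : ℤ) ∣ a) → p ∣ N1 := by
    intro p hpS hpa
    exact Finset.dvd_prod_of_mem _ (Finset.mem_filter.mpr ⟨hpS, hpa⟩)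
  have hmem2 : ∀ p : ℕ, p ∈ S → ((p : ℤ) ∣ a) → ¬ ((p : ℤ) ∣ c) → p ∣ N2 := by
    intro p hpS hpa hpc
    exact Finset.dvd_prod_of_mem _ (Finset.mem_filter.mpr ⟨hpS, hpa, hpc⟩)
  have hcopN : IsCoprime ((N2 : ℤ)) ((N1 : ℤ)) := by
    rw [Int.isCoprime_iff_gcd_eq_one, Int.gcd_natCast_natCast]
    by_contra hg
    obtain ⟨p, hp, hpg⟩ := Nat.exists_prime_and_dvd hg
    exact (hd1 p hp (hpg.trans (Nat.gcd_dvd_right _ _)))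
      ((hd2 p hp (hpg.trans (Nat.gcd_dvd_left _ _))).1)
  refine ⟨(N2 : ℤ), (N1 : ℤ), hcopN, ?_⟩
  rw [Int.isCoprime_iff_gcd_eq_one]
  by_contra hg
  obtain ⟨p, hp, hpg⟩ := Nat.exists_prime_and_dvd hg
  have hpZ : Prime (p : ℤ) := Nat.prime_iff_prime_int.mp hp
  have hpg' : (p : ℤ) ∣ ↑(Int.gcd (a * (N2:ℤ) ^ 2 + b * (N2:ℤ) * (N1:ℤ) + c * (N1:ℤ) ^ 2) n) :=
    Int.natCast_dvd_natCast.mpr hpg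
  have hpf : (p : ℤ) ∣ a * (N2:ℤ) ^ 2 + b * (N2:ℤ) * (N1:ℤ) + c * (N1:ℤ) ^ 2 :=
    hpg'.trans (Int.gcd_dvd_left _ _)
  have hpn : (p : ℤ) ∣ n := hpg'.trans (Int.gcd_dvd_right _ _)
  have hpS : p ∈ S := by
    rw [hS, Nat.mem_primeFactors]
    refine ⟨hp, ?_, by simpa using hn.ne'⟩
    have := Int.natAbs_dvd_natAbs.mpr hpn
    simpa using this
  have hpN1 : ¬ ((p:ℤ) ∣ (N1:ℤ)) → ¬ (p ∣ N1) := fun h h' => h (Int.natCast_dvd_natCast.mpr h')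
  by_cases hpa : (p : ℤ) ∣ a
  · by_cases hpc : (p : ℤ) ∣ c
    · -- p ∤ b
      have hpb : ¬ ((p : ℤ) ∣ b) := by
        intro hb
        have h1 : (p : ℤ) ∣ (Int.gcd b c : ℤ) := Int.dvd_coe_gcd hb hpc
        have h2 : (p : ℤ) ∣ (Int.gcd a (Int.gcd b c) : ℤ) := Int.dvd_coe_gcd hpa h1
        rw [hprim] at h2
        exact hp.one_lt.ne' (by exact_mod_cast Int.isUnit_iff.mp (isUnit_of_dvd_one h2) |>.elim (fun h => by exact_mod_cast h) (fun h => by omega))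
      have hN1' : ¬ ((p:ℤ) ∣ (N1:ℤ)) := by
        intro h
        exact hd1 p hp (Int.natCast_dvd_natCast.mp h) hpa
      have hN2' : ¬ ((p:ℤ) ∣ (N2:ℤ)) := by
        intro h
        exact (hd2 p hp (Int.natCast_dvd_natCast.mp h)).2 hpc
      have : (p:ℤ) ∣ b * (N2:ℤ) * (N1:ℤ) := by
        have := hpf
        have h1 : (p:ℤ) ∣ a * (N2:ℤ)^2 := hpa.mul_right _
        have h2 : (p:ℤ) ∣ c * (N1:ℤ)^2 := hpc.mul_right _
        have := (this.sub h1).sub h2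
        convert this using 1; rfl; ring
      rcases hpZ.dvd_mul.mp this with h | h
      · rcases hpZ.dvd_mul.mp h with h' | h'
        · exact hpb h'
        · exact hN2' h'
      · exact hN1' h
    · have hpN2 : (p:ℤ) ∣ (N2:ℤ) := Int.natCast_dvd_natCast.mpr (hmem2 p hpS hpa hpc)
      have hcN1 : (p:ℤ) ∣ c * (N1:ℤ)^2 := by
        have h1 : (p:ℤ) ∣ a * (N2:ℤ)^2 := hpa.mul_right _
        have h2 : (p:ℤ) ∣ b * (N2:ℤ) * (N1:ℤ) := (hpN2.mul_left b).mul_right _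
        have h3 := (hpf.sub h1).sub h2
        convert h3 using 1; rfl; ring
      rcases hpZ.dvd_mul.mp hcN1 with h | h
      · exact hpc h
      · exact hd1 p hp (Int.natCast_dvd_natCast.mp (hpZ.dvd_of_dvd_pow h)) hpa
  · have hpN1' : (p:ℤ) ∣ (N1:ℤ) := Int.natCast_dvd_natCast.mpr (hmem1 p hpS hpa)
    have haN2 : (p:ℤ) ∣ a * (N2:ℤ)^2 := by
      have h1 : (p:ℤ) ∣ c * (N1:ℤ)^2 := (hpN1'.pow (by norm_num)).mul_left c
      have h2 : (p:ℤ) ∣ b * (N2:ℤ) * (N1:ℤ) := hpN1'.mul_left _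
      have h3 := (hpf.sub h2).sub h1
      convert h3 using 1; rfl; ring
    rcases hpZ.dvd_mul.mp haN2 with h | h
    · exact hpa h
    · exact hpa (hd2 p hp (Int.natCast_dvd_natCast.mp (hpZ.dvd_of_dvd_pow h))).1
lemma pos_aux_qf (a x u v n : ℤ) (ha : 0 < a) (hn : 0 < n)
    (h : 4 * a * x = u ^ 2 + n * v ^ 2) (huv : u ≠ 0 ∨ v ≠ 0) : 0 < x := by
  have h1 : 0 < u ^ 2 + n * v ^ 2 := by
    rcases huv with h' | h'
    · have h2 := sq_pos_of_ne_zero h'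
      have h3 := mul_nonneg hn.le (sq_nonneg v)
      linarith
    · have h2 := mul_pos hn (sq_pos_of_ne_zero h')
      have h3 := sq_nonneg u
      linarith
  have h2 : 4 * a * 0 < 4 * a * x := by linarith
  exact lt_of_mul_lt_mul_left (by linarith) (by linarith : (0:ℤ) ≤ 4 * a)
/-- Every primitive positive definite binary quadratic form of discriminant `-n`
with `n ≡ 3 mod 4` is properly equivalent to `(nC/2)·x² - nA·xy - (B/2)·y²` with
`nA² + BC = -1`, `B < 0` even, `C > 0` even. -/
theorem equiv_to_special_form_disc_n (n a b c : ℤ) (hn : 0 < n) (hn4 : n % 4 = 3)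
    (ha : 0 < a) (hdisc : b ^ 2 - 4 * a * c = -n)
    (hprim : Int.gcd a (Int.gcd b c) = 1) :
    ∃ A B C p q r s : ℤ,
      n * A ^ 2 + B * C = -1 ∧ B < 0 ∧ 0 < C ∧ Even B ∧ Even C ∧
      p * s - q * r = 1 ∧
      2 * (a * p ^ 2 + b * p * r + c * r ^ 2) = n * C ∧
      2 * a * p * q + b * (p * s + q * r) + 2 * c * r * s = -(n * A) ∧
      2 * (a * q ^ 2 + b * q * s + c * s ^ 2) = -B := by
  obtain ⟨p₁, r₁, hxy, hfn⟩ := exists_coprime_value n a b c hn hprim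
  obtain ⟨s₁, q₁', hbz⟩ := hxy
  obtain ⟨q₁, hq₁⟩ : ∃ x : ℤ, x = -q₁' := ⟨_, rfl⟩
  have hdet1 : p₁ * s₁ - q₁ * r₁ = 1 := by rw [hq₁]; linarith [hbz]
  obtain ⟨a₀, ha₀⟩ : ∃ x : ℤ, x = a * p₁ ^ 2 + b * p₁ * r₁ + c * r₁ ^ 2 := ⟨_, rfl⟩
  obtain ⟨b₀, hb₀⟩ : ∃ x : ℤ, x = 2 * a * p₁ * q₁ + b * (p₁ * s₁ + q₁ * r₁) + 2 * c * r₁ * s₁ :=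
    ⟨_, rfl⟩
  obtain ⟨c₀, hc₀⟩ : ∃ x : ℤ, x = a * q₁ ^ 2 + b * q₁ * s₁ + c * s₁ ^ 2 := ⟨_, rfl⟩
  rw [← ha₀] at hfn
  have hd₀ : b₀ ^ 2 - 4 * a₀ * c₀ = -n := by
    rw [ha₀, hb₀, hc₀]
    linear_combination (p₁ * s₁ - q₁ * r₁) ^ 2 * hdisc - n * (p₁ * s₁ - q₁ * r₁ + 1) * hdet1
  have h2n : IsCoprime (2 : ℤ) n := ⟨(n + 1) / 2, -1, by omega⟩
  obtain ⟨u₂, v₂, hbez⟩ := h2n.mul_left hfn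
  obtain ⟨t, ht⟩ : ∃ x : ℤ, x = -(b₀ * u₂) := ⟨_, rfl⟩
  obtain ⟨k, hk'⟩ : ∃ x : ℤ, x = b₀ * v₂ := ⟨_, rfl⟩
  have hk : 2 * a₀ * t + b₀ = n * k := by rw [ht, hk']; linear_combination (-b₀) * hbez
  obtain ⟨p, hp⟩ : ∃ x : ℤ, x = p₁ * t + q₁ := ⟨_, rfl⟩
  obtain ⟨r, hr⟩ : ∃ x : ℤ, x = r₁ * t + s₁ := ⟨_, rfl⟩
  obtain ⟨q, hq⟩ : ∃ x : ℤ, x = p₁ * (t - 1) + q₁ := ⟨_, rfl⟩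
  obtain ⟨s, hs⟩ : ∃ x : ℤ, x = r₁ * (t - 1) + s₁ := ⟨_, rfl⟩
  obtain ⟨a', ha'⟩ : ∃ x : ℤ, x = a * p ^ 2 + b * p * r + c * r ^ 2 := ⟨_, rfl⟩
  obtain ⟨bf, hbf⟩ : ∃ x : ℤ, x = 2 * a * p * q + b * (p * s + q * r) + 2 * c * r * s := ⟨_, rfl⟩
  obtain ⟨c', hc'⟩ : ∃ x : ℤ, x = a * q ^ 2 + b * q * s + c * s ^ 2 := ⟨_, rfl⟩
  have hdet : p * s - q * r = 1 := by
    rw [hp, hr, hq, hs]; linear_combination hdet1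
  have ha'eq : a' = a₀ * t ^ 2 + b₀ * t + c₀ := by
    rw [ha', hp, hr, ha₀, hb₀, hc₀]; ring
  have hbfeq : bf = 2 * a₀ * t * (t - 1) + b₀ * (2 * t - 1) + 2 * c₀ := by
    rw [hbf, hp, hr, hq, hs, ha₀, hb₀, hc₀]; ring
  have h4 : 4 * a₀ * a' = (n * k) ^ 2 + n := by
    rw [ha'eq]; linear_combination (2 * a₀ * t + b₀ + n * k) * hk - hd₀
  have h5 : 2 * a₀ * bf = (n * k) * (n * k - 2 * a₀) + n := by
    rw [hbfeq]; linear_combination (2 * a₀ * t + b₀ + n * k - 2 * a₀) * hk - hd₀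
  have hcop4 : IsCoprime n (4 * a₀) := by
    have h44 : (4 * a₀ : ℤ) = 2 * (2 * a₀) := by ring
    rw [h44]
    exact (h2n.mul_left (h2n.mul_left hfn)).symm
  have hna' : n ∣ a' := by
    have hdv : n ∣ (4 * a₀) * a' := ⟨n * k ^ 2 + 1, by linear_combination h4⟩
    exact hcop4.dvd_of_dvd_mul_left hdv
  have hnbf : n ∣ bf := by
    have hcop2' : IsCoprime n (2 * a₀) := (h2n.mul_left hfn).symm
    have hdv : n ∣ (2 * a₀) * bf := ⟨k * (n * k - 2 * a₀) + 1, by linear_combination h5⟩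
    exact hcop2'.dvd_of_dvd_mul_left hdv
  obtain ⟨m, hm⟩ := hna'
  obtain ⟨l, hl⟩ := hnbf
  have hkey : bf ^ 2 - 4 * a' * c' = -n := by
    rw [hbf, ha', hc']
    linear_combination (p * s - q * r) ^ 2 * hdisc - n * (p * s - q * r + 1) * hdet
  have hnne : n ≠ 0 := hn.ne'
  have h4a : 4 * a * a' = (2 * a * p + b * r) ^ 2 + n * r ^ 2 := by
    rw [ha']; linear_combination (-(r ^ 2)) * hdisc
  have h4c : 4 * a * c' = (2 * a * q + b * s) ^ 2 + n * s ^ 2 := by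
    rw [hc']; linear_combination (-(s ^ 2)) * hdisc
  have ha'pos : 0 < a' := by
    rcases eq_or_ne r 0 with hr0 | hr0
    · have hp0 : p ≠ 0 := by
        intro h0; rw [h0, hr0] at hdet; simp at hdet
      have hne : 2 * a * p + b * r ≠ 0 := by
        rw [hr0]; simpa using mul_ne_zero (mul_ne_zero two_ne_zero ha.ne') hp0
      exact pos_aux_qf a a' _ _ n ha hn h4a (Or.inl hne)
    · exact pos_aux_qf a a' _ _ n ha hn h4a (Or.inr hr0)
  have hc'pos : 0 < c' := by
    rcases eq_or_ne s 0 with hs0 | hs0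
    · have hq0 : q ≠ 0 := by
        intro h0; rw [h0, hs0] at hdet; simp at hdet
      have hne : 2 * a * q + b * s ≠ 0 := by
        rw [hs0]; simpa using mul_ne_zero (mul_ne_zero two_ne_zero ha.ne') hq0
      exact pos_aux_qf a c' _ _ n ha hn h4c (Or.inl hne)
    · exact pos_aux_qf a c' _ _ n ha hn h4c (Or.inr hs0)
  refine ⟨-l, -2 * c', 2 * m, p, q, r, s, ?_, by linarith, ?_, ⟨-c', by ring⟩, ⟨m, by ring⟩,
    hdet, ?_, ?_, ?_⟩
  · exact mul_left_cancel₀ hnne (show n * (n * (-l) ^ 2 + (-2 * c') * (2 * m)) = n * (-1) by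
      linear_combination hkey - (bf + n * l) * hl + 4 * c' * hm)
  · have hnm : 0 < n * m := by rw [← hm]; exact ha'pos
    have hm0 : 0 < m := lt_of_mul_lt_mul_left (by simpa using hnm) hn.le
    linarith
  · rw [← ha']; linear_combination 2 * hm
  · rw [← hbf]; linear_combination hl
  · rw [← hc']; ring
end

section
/- Let n ≡ 3 (mod 4), n > 1, and τ = (-2n + 2√(-n))/(n(n+1)) ∈ ℂ. Then τ·(n + √(-n)) = -2, and the lattice ℤτ + ℤ equals τ·O where O = ℤ + ℤ·(n(n+1)/4)·τ = ℤ[(-n+√(-n))/2]; in particular the multiplier ring {λ ∈ ℂ : λ(ℤτ+ℤ) ⊆ ℤτ+ℤ} equals ℤ[(-n+√(-n))/2]. -/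
open Complex

/-- For `n ≡ 3 mod 4`, `τ = (-2n + 2i√n)/(n(n+1))` satisfies `τ(n + i√n) = -2`;
the generator `(n(n+1)/4)·τ` equals `(-n + i√n)/2`; the lattice `ℤτ + ℤ` equals
`τ·O` where `O = ℤ + ℤ·(-n+i√n)/2`, and the multiplier ring of `ℤτ + ℤ` is `O`. -/
theorem multiplier_ring_case2 (n : ℤ) (hn : 1 < n) (hn4 : n % 4 = 3) :
    ((-2 * (n : ℂ) + 2 * Complex.I * Real.sqrt n) / ((n : ℂ) * (n + 1)))
        * ((n : ℂ) + Complex.I * Real.sqrt n) = -2 ∧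
    ((n : ℂ) * (n + 1) / 4) *
        ((-2 * (n : ℂ) + 2 * Complex.I * Real.sqrt n) / ((n : ℂ) * (n + 1)))
      = (-(n : ℂ) + Complex.I * Real.sqrt n) / 2 ∧
    ((Submodule.span ℤ
        ({(-2 * (n : ℂ) + 2 * Complex.I * Real.sqrt n) / ((n : ℂ) * (n + 1)), 1} : Set ℂ)
        : Set ℂ)
      = (fun z => ((-2 * (n : ℂ) + 2 * Complex.I * Real.sqrt n) / ((n : ℂ) * (n + 1))) * z) ''
          (Submodule.span ℤ ({1, (-(n : ℂ) + Complex.I * Real.sqrt n) / 2} : Set ℂ) : Set ℂ)) ∧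
    {lam : ℂ | ∀ z ∈ (Submodule.span ℤ
        ({(-2 * (n : ℂ) + 2 * Complex.I * Real.sqrt n) / ((n : ℂ) * (n + 1)), 1} : Set ℂ)),
        lam * z ∈ (Submodule.span ℤ
        ({(-2 * (n : ℂ) + 2 * Complex.I * Real.sqrt n) / ((n : ℂ) * (n + 1)), 1} : Set ℂ))}
      = (Submodule.span ℤ ({1, (-(n : ℂ) + Complex.I * Real.sqrt n) / 2} : Set ℂ) : Set ℂ) := by
  have hn0 : (0:ℝ) ≤ (n:ℝ) := by exact_mod_cast le_of_lt (lt_trans one_pos hn)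
  set s : ℂ := (Real.sqrt (n:ℝ) : ℂ) with hsdef
  have hs2 : s ^ 2 = (n:ℂ) := by
    rw [hsdef]; norm_cast; exact Real.sq_sqrt hn0
  have hnne : (n:ℂ) ≠ 0 := by norm_cast; omega
  have hn1ne : ((n:ℂ) + 1) ≠ 0 := by
    have h : ((n+1:ℤ):ℂ) ≠ 0 := by norm_cast; omega
    push_cast at h; exact h
  obtain ⟨k, hk⟩ : ∃ k : ℤ, n + 1 = 4 * k := ⟨(n+1)/4, by omega⟩
  set m : ℤ := n * k with hmdef
  have h4m : (4:ℤ) * m = n * (n + 1) := by rw [hmdef, hk]; ring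
  have hmC : (4:ℂ) * (m:ℂ) = (n:ℂ) * ((n:ℂ) + 1) := by exact_mod_cast h4m
  set τ : ℂ := (-2 * (n : ℂ) + 2 * Complex.I * s) / ((n : ℂ) * (n + 1)) with hτdef
  set ω : ℂ := (-(n : ℂ) + Complex.I * s) / 2 with hωdef
  have h1 : τ * ((n : ℂ) + Complex.I * s) = -2 := by
    rw [hτdef]; field_simp
    linear_combination s^2*Complex.I_sq - hs2
  have h2 : ((n : ℂ) * (n + 1) / 4) * τ = ω := by
    rw [hτdef, hωdef]; field_simp; ring
  have hIs : Complex.I * s = 2 * ω + (n:ℂ) := by rw [hωdef]; ring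
  clear_value s τ ω m
  have hτω : τ * ω = -1 - (n:ℂ) * τ := by
    linear_combination (1/2 : ℂ) * h1 - (τ/2) * hIs
  have hτm : (m:ℂ) * τ = ω := by
    linear_combination h2 + (τ/4) * hmC
  have hω2 : ω * ω = -(n:ℂ) * ω - (m:ℂ) := by
    linear_combination (m:ℂ) * hτω - (ω + (n:ℂ)) * hτm
  have hmτ2 : (m:ℂ) * (τ * τ) = -(n:ℂ) * τ - 1 := by
    linear_combination τ * hτm + hτω
  -- uniqueness of coefficients
  have huniq : ∀ a b : ℤ, (a:ℂ) * τ + (b:ℂ) = 0 → a = 0 ∧ b = 0 := by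
    intro a b h
    have heq : (a:ℂ) * ω = -(b:ℂ) * (m:ℂ) := by
      linear_combination (m:ℂ) * h - (a:ℂ) * hτm
    have heq2 : (a:ℂ) * s * Complex.I = (a:ℂ) * (n:ℂ) - 2 * (b:ℂ) * (m:ℂ) := by
      linear_combination 2 * heq + (a:ℂ) * hIs
    rw [hsdef] at heq2
    have him : (a:ℝ) * Real.sqrt (n:ℝ) = 0 := by
      have h' := congrArg Complex.im heq2
      simpa using h'
    have hsne : Real.sqrt (n:ℝ) ≠ 0 := by
      have : (0:ℝ) < Real.sqrt (n:ℝ) := Real.sqrt_pos.mpr (by exact_mod_cast lt_trans one_pos hn)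
      linarith
    have ha : a = 0 := by
      have : (a:ℝ) = 0 := by
        rcases mul_eq_zero.mp him with h' | h'
        · exact h'
        · exact absurd h' hsne
      exact_mod_cast this
    refine ⟨ha, ?_⟩
    have hb : (b:ℂ) = 0 := by push_cast [ha] at h; simpa using h
    exact_mod_cast hb
  set O : Submodule ℤ ℂ := Submodule.span ℤ ({1, ω} : Set ℂ) with hOdef
  set L : Submodule ℤ ℂ := Submodule.span ℤ ({τ, 1} : Set ℂ) with hLdef
  have hOmem : ∀ x : ℂ, x ∈ O ↔ ∃ p q : ℤ, (p:ℂ) + (q:ℂ) * ω = x := by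
    intro x
    rw [hOdef, Submodule.mem_span_pair]
    constructor
    · rintro ⟨p, q, rfl⟩; exact ⟨p, q, by push_cast [zsmul_eq_mul]; ring⟩
    · rintro ⟨p, q, rfl⟩; exact ⟨p, q, by push_cast [zsmul_eq_mul]; ring⟩
  have hLmem : ∀ x : ℂ, x ∈ L ↔ ∃ p q : ℤ, (p:ℂ) * τ + (q:ℂ) = x := by
    intro x
    rw [hLdef, Submodule.mem_span_pair]
    constructor
    · rintro ⟨p, q, rfl⟩; exact ⟨p, q, by push_cast [zsmul_eq_mul]; ring⟩
    · rintro ⟨p, q, rfl⟩; exact ⟨p, q, by push_cast [zsmul_eq_mul]; ring⟩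
  have hOmul : ∀ x ∈ O, ∀ y ∈ O, x * y ∈ O := by
    intro x hx y hy
    obtain ⟨p, q, hx⟩ := (hOmem x).mp hx
    obtain ⟨r, t, hy⟩ := (hOmem y).mp hy
    refine (hOmem _).mpr ⟨p * r - q * t * m, p * t + q * r - q * t * n, ?_⟩
    push_cast
    linear_combination ((r:ℂ) + (t:ℂ) * ω) * hx + x * hy - (q:ℂ) * (t:ℂ) * hω2
  have hchar : ∀ z : ℂ, z ∈ L ↔ ∃ w ∈ O, z = τ * w := by
    intro z
    constructor
    · intro hz
      obtain ⟨a, b, hab⟩ := (hLmem z).mp hz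
      refine ⟨((a - b * n : ℤ):ℂ) + ((-b : ℤ):ℂ) * ω,
        (hOmem _).mpr ⟨a - b * n, -b, rfl⟩, ?_⟩
      push_cast
      linear_combination (b:ℂ) * hτω - hab
    · rintro ⟨w, hw, rfl⟩
      obtain ⟨p, q, hpq⟩ := (hOmem w).mp hw
      refine (hLmem _).mpr ⟨p - q * n, -q, ?_⟩
      push_cast
      linear_combination τ * hpq - (q:ℂ) * hτω
  refine ⟨h1, h2, ?_, ?_⟩
  · ext z
    simp only [Set.mem_image, SetLike.mem_coe]
    rw [hchar z]
    constructor
    · rintro ⟨w, hw, rfl⟩; exact ⟨w, hw, rfl⟩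
    · rintro ⟨w, hw, rfl⟩; exact ⟨w, hw, rfl⟩
  · ext lam
    simp only [Set.mem_setOf_eq, SetLike.mem_coe]
    constructor
    · intro hl
      have hτL : τ ∈ L := Submodule.subset_span (by simp)
      have h1L : (1:ℂ) ∈ L := Submodule.subset_span (by simp)
      obtain ⟨a, b, hab⟩ := (hLmem _).mp (by simpa using hl 1 h1L)
      obtain ⟨c, d, hcd⟩ := (hLmem _).mp (hl τ hτL)
      have hkey : ((m * c - b * m + a * n : ℤ):ℂ) * τ + ((m * d + a : ℤ):ℂ) = 0 := by
        push_cast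
        linear_combination (m:ℂ) * hcd - (m:ℂ) * τ * hab + (a:ℂ) * hmτ2
      obtain ⟨_, h2'⟩ := huniq _ _ hkey
      have haC : (a:ℂ) = -((m:ℂ) * (d:ℂ)) := by
        have : a = -(m * d) := by omega
        exact_mod_cast this
      refine (hOmem lam).mpr ⟨b, -d, ?_⟩
      push_cast
      linear_combination hab - τ * haC + (d:ℂ) * hτm
    · intro hl z hz
      obtain ⟨w, hw, rfl⟩ := (hchar z).mp hz
      have hr : lam * (τ * w) = τ * (lam * w) := by ring
      rw [hr]
      exact (hchar _).mpr ⟨lam * w, hOmul lam hl w hw, rfl⟩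
end
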